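/- arXiv:2402.02376 — 4 statements merged into one kernel-verified Lean document; each statement's English description precedes it below -/
import Mathlib

section
/- Let ε₁, …, ε_T ∈ [0, 1/2) be the weighted errors of the weak classifiers in T rounds of binary AdaBoost, and let the training error of the combined classifier h = sgn(Σₜ αₜhₜ) with αₜ = (1/2)log((1-εₜ)/εₜ) be R̂_S(h) = (1/n)Σᵢ 𝟙[h(xᵢ) ≠ yᵢ]. Then R̂_S(h) ≤ ∏ₜ 2√(εₜ(1-εₜ)) ≤ exp(-2 Σₜ (1/2 - εₜ)²). -/
open Finset Real

/-- Learning guarantee for the training error of binary AdaBoost: with weighted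
errors `εₜ ∈ (0, 1/2)`, weights `αₜ = (1/2)log((1-εₜ)/εₜ)` and normalization
factors `Zₜ = 2√(εₜ(1-εₜ))`, the training error of the combined classifier
`h = sgn(Σₜ αₜ hₜ)` satisfies
`R̂_S(h) ≤ ∏ₜ 2√(εₜ(1-εₜ)) ≤ exp(-2 Σₜ (1/2 - εₜ)²)`. -/
theorem adaboost_training_error_bound
    (n T : ℕ) (hn : 0 < n)
    (y : Fin n → ℝ) (h : Fin T → Fin n → ℝ)
    (hy : ∀ i, y i = -1 ∨ y i = 1)
    (hh : ∀ t i, h t i = -1 ∨ h t i = 1)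
    (ε α Z : Fin T → ℝ)
    (D : Fin (T + 1) → Fin n → ℝ)
    (hD1 : ∀ i, D 0 i = 1 / n)
    (hε : ∀ t : Fin T, ε t = ∑ i, D t.castSucc i * (if h t i ≠ y i then (1:ℝ) else 0))
    (hε0 : ∀ t, 0 < ε t) (hεhalf : ∀ t, ε t < 1/2)
    (hα : ∀ t, α t = (1/2) * Real.log ((1 - ε t) / ε t))
    (hZ : ∀ t, Z t = 2 * Real.sqrt (ε t * (1 - ε t)))
    (hDrec : ∀ (t : Fin T) (i : Fin n),
      D t.succ i = D t.castSucc i * Real.exp (-(α t * y i * h t i)) / Z t) :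
    (1 / n : ℝ) * ∑ i, (if Real.sign (∑ t, α t * h t i) ≠ y i then (1:ℝ) else 0)
        ≤ ∏ t, 2 * Real.sqrt (ε t * (1 - ε t))
      ∧ ∏ t, 2 * Real.sqrt (ε t * (1 - ε t))
        ≤ Real.exp (-2 * ∑ t, (1/2 - ε t)^2) := by
  have hnR : (0:ℝ) < n := Nat.cast_pos.mpr hn
  have hε1 : ∀ t, (0:ℝ) < 1 - ε t := fun t => by linarith [hεhalf t]
  have hZpos : ∀ t, 0 < Z t := fun t => by
    rw [hZ t]
    have := Real.sqrt_pos.mpr (mul_pos (hε0 t) (hε1 t))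
    linarith
  have hexpα : ∀ t, Real.exp (α t) = Real.sqrt (1 - ε t) / Real.sqrt (ε t) := by
    intro t
    rw [hα t, mul_comm, ← Real.rpow_def_of_pos (div_pos (hε1 t) (hε0 t)),
      ← Real.sqrt_eq_rpow, Real.sqrt_div (hε1 t).le]
  have hexpnegα : ∀ t, Real.exp (-(α t)) = Real.sqrt (ε t) / Real.sqrt (1 - ε t) := by
    intro t
    rw [Real.exp_neg, hexpα t, inv_div]
  -- Key step: the exponential sum at round t equals Z t
  have hstep : ∀ t : Fin T, (∑ i, D t.castSucc i = 1) →
      ∑ i, D t.castSucc i * Real.exp (-(α t * y i * h t i)) = Z t := by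
    intro t hsum
    have hpt : ∀ i, Real.exp (-(α t * y i * h t i)) =
        (if h t i ≠ y i then (1:ℝ) else 0) * Real.exp (α t)
        + (1 - (if h t i ≠ y i then (1:ℝ) else 0)) * Real.exp (-(α t)) := by
      intro i
      rcases hy i with h1 | h1 <;> rcases hh t i with h2 | h2 <;>
        norm_num [h1, h2]
    have e1 : ∑ i, D t.castSucc i * Real.exp (-(α t * y i * h t i))
        = (∑ i, D t.castSucc i * (if h t i ≠ y i then (1:ℝ) else 0)) * Real.exp (α t)
          + (∑ i, (D t.castSucc i - D t.castSucc i * (if h t i ≠ y i then (1:ℝ) else 0)))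
              * Real.exp (-(α t)) := by
      rw [Finset.sum_mul, Finset.sum_mul, ← Finset.sum_add_distrib]
      refine Finset.sum_congr rfl fun i _ => by rw [hpt i]; ring
    rw [e1, Finset.sum_sub_distrib, hsum, ← hε t]
    -- arithmetic
    set a := Real.sqrt (ε t) with ha
    set b := Real.sqrt (1 - ε t) with hb
    have ha0 : 0 < a := Real.sqrt_pos.mpr (hε0 t)
    have hb0 : 0 < b := Real.sqrt_pos.mpr (hε1 t)
    have ha2 : a ^ 2 = ε t := Real.sq_sqrt (hε0 t).le
    have hb2 : b ^ 2 = 1 - ε t := Real.sq_sqrt (hε1 t).le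
    have hab : Real.sqrt (ε t * (1 - ε t)) = a * b := Real.sqrt_mul (hε0 t).le _
    rw [hexpα t, hexpnegα t, hZ t, hab, ← ha, ← hb, ← hb2, ← ha2]
    field_simp
    ring
  -- Main induction
  have main : ∀ t : Fin (T+1),
      (∑ i, D t i = 1) ∧
      ∀ i, (∏ s ∈ Finset.univ.filter (fun s : Fin T => (s:ℕ) < (t:ℕ)), Z s) * D t i
        = (1/n) * Real.exp (-(y i *
            ∑ s ∈ Finset.univ.filter (fun s : Fin T => (s:ℕ) < (t:ℕ)), α s * h s i)) := by
    intro t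
    induction t using Fin.induction with
    | zero =>
      constructor
      · simp only [hD1]
        rw [Finset.sum_const, Finset.card_univ, Fintype.card_fin, nsmul_eq_mul]
        field_simp
      · intro i
        simp [hD1]
    | succ t ih =>
      have hnotmem : t ∉ Finset.univ.filter
          (fun s : Fin T => (s:ℕ) < ((t.castSucc : Fin (T+1)):ℕ)) := by simp
      have hfilt : Finset.univ.filter (fun s : Fin T => (s:ℕ) < ((t.succ : Fin (T+1)):ℕ))
          = insert t (Finset.univ.filter
              (fun s : Fin T => (s:ℕ) < ((t.castSucc : Fin (T+1)):ℕ))) := by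
        ext s
        simp only [Finset.mem_filter, Finset.mem_univ, true_and, Finset.mem_insert,
          Fin.val_succ, Fin.coe_castSucc, Nat.lt_succ_iff_lt_or_eq, Fin.ext_iff]
        tauto
      have hS : ∑ i, D t.succ i = 1 := by
        have hs := hstep t ih.1
        calc ∑ i, D t.succ i
            = (∑ i, D t.castSucc i * Real.exp (-(α t * y i * h t i))) / Z t := by
              simp only [hDrec t]
              rw [Finset.sum_div]
          _ = 1 := by rw [hs]; exact div_self (hZpos t).ne'
      refine ⟨hS, fun i => ?_⟩
      rw [hfilt, Finset.prod_insert hnotmem, Finset.sum_insert hnotmem, hDrec t i]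
      have hP := ih.2 i
      have hZne : Z t ≠ 0 := (hZpos t).ne'
      calc (Z t * ∏ s ∈ Finset.univ.filter
              (fun s : Fin T => (s:ℕ) < ((t.castSucc : Fin (T+1)):ℕ)), Z s)
            * (D t.castSucc i * Real.exp (-(α t * y i * h t i)) / Z t)
          = (∏ s ∈ Finset.univ.filter
              (fun s : Fin T => (s:ℕ) < ((t.castSucc : Fin (T+1)):ℕ)), Z s)
            * D t.castSucc i * Real.exp (-(α t * y i * h t i)) := by
            field_simp
        _ = (1/n) * Real.exp (-(y i * ∑ s ∈ Finset.univ.filter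
              (fun s : Fin T => (s:ℕ) < ((t.castSucc : Fin (T+1)):ℕ)), α s * h s i))
            * Real.exp (-(α t * y i * h t i)) := by rw [hP]
        _ = (1/n) * Real.exp (-(y i * (α t * h t i + ∑ s ∈ Finset.univ.filter
              (fun s : Fin T => (s:ℕ) < ((t.castSucc : Fin (T+1)):ℕ)), α s * h s i))) := by
            rw [mul_assoc, ← Real.exp_add]
            exact congrArg (fun z => 1/(n:ℝ) * Real.exp z) (by ring)
  obtain ⟨hSlast, hPlast⟩ := main (Fin.last T)
  have huniv : Finset.univ.filter
      (fun s : Fin T => (s:ℕ) < ((Fin.last T : Fin (T+1)):ℕ)) = Finset.univ := by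
    ext s; simp [s.is_lt]
  have key : ∏ t, Z t = ∑ i, (1/n : ℝ) * Real.exp (-(y i * ∑ t, α t * h t i)) := by
    calc ∏ t, Z t = (∏ t, Z t) * ∑ i, D (Fin.last T) i := by rw [hSlast, mul_one]
      _ = ∑ i, (∏ t, Z t) * D (Fin.last T) i := by rw [Finset.mul_sum]
      _ = ∑ i, (1/n : ℝ) * Real.exp (-(y i * ∑ t, α t * h t i)) := by
          refine Finset.sum_congr rfl fun i _ => ?_
          have hp := hPlast i
          rw [huniv] at hp
          exact hp
  have hprodZ : ∏ t, Z t = ∏ t, 2 * Real.sqrt (ε t * (1 - ε t)) :=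
    Finset.prod_congr rfl fun t _ => hZ t
  constructor
  · -- first inequality
    have h1 : ∀ i, (if Real.sign (∑ t, α t * h t i) ≠ y i then (1:ℝ) else 0)
        ≤ Real.exp (-(y i * ∑ t, α t * h t i)) := by
      intro i
      by_cases hc : Real.sign (∑ t, α t * h t i) ≠ y i
      · rw [if_pos hc]
        apply Real.one_le_exp
        rcases hy i with h1 | h1
        · have hf : ¬ (∑ t, α t * h t i) < 0 := fun hlt =>
            hc (by rw [Real.sign_of_neg hlt, h1])
          have := not_lt.mp hf
          nlinarith
        · have hf : ¬ (0:ℝ) < (∑ t, α t * h t i) := fun hlt =>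
            hc (by rw [Real.sign_of_pos hlt, h1])
          have := not_lt.mp hf
          nlinarith
      · rw [if_neg hc]; positivity
    calc (1 / n : ℝ) * ∑ i, (if Real.sign (∑ t, α t * h t i) ≠ y i then (1:ℝ) else 0)
        = ∑ i, (1/n : ℝ) * (if Real.sign (∑ t, α t * h t i) ≠ y i then (1:ℝ) else 0) := by
          rw [Finset.mul_sum]
      _ ≤ ∑ i, (1/n : ℝ) * Real.exp (-(y i * ∑ t, α t * h t i)) :=
          Finset.sum_le_sum fun i _ => mul_le_mul_of_nonneg_left (h1 i) (by positivity)
      _ = ∏ t, Z t := key.symm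
      _ = ∏ t, 2 * Real.sqrt (ε t * (1 - ε t)) := hprodZ
  · -- second inequality
    have hpt : ∀ t : Fin T, 2 * Real.sqrt (ε t * (1 - ε t))
        ≤ Real.exp (-2 * (1/2 - ε t)^2) := by
      intro t
      have hnn : (0:ℝ) ≤ ε t * (1 - ε t) := (mul_pos (hε0 t) (hε1 t)).le
      have hsq : (2 * Real.sqrt (ε t * (1 - ε t)))^2 ≤ (Real.exp (-2 * (1/2 - ε t)^2))^2 := by
        have he : (Real.exp (-2 * (1/2 - ε t)^2))^2 = Real.exp (-(4:ℝ) * (1/2 - ε t)^2) := by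
          rw [sq, ← Real.exp_add]
          exact congrArg Real.exp (by ring)
        have hexp := Real.add_one_le_exp (-(4:ℝ) * (1/2 - ε t)^2)
        rw [mul_pow, Real.sq_sqrt hnn, he]
        nlinarith [hexp]
      have h2 := Real.sqrt_le_sqrt hsq
      rwa [Real.sqrt_sq (by positivity), Real.sqrt_sq (Real.exp_pos _).le] at h2
    calc ∏ t, 2 * Real.sqrt (ε t * (1 - ε t))
        ≤ ∏ t, Real.exp (-2 * (1/2 - ε t)^2) :=
          Finset.prod_le_prod (fun t _ => by positivity) (fun t _ => hpt t)
      _ = Real.exp (∑ t, -2 * (1/2 - ε t)^2) := (Real.exp_sum _ _).symm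
      _ = Real.exp (-2 * ∑ t, (1/2 - ε t)^2) := by rw [← Finset.mul_sum]
end

section
/- For a binary AdaBoost run with normalization factors Zₜ = Σᵢ Dₜ(i)exp(-αₜ yᵢ hₜ(xᵢ)), the training error of the final classifier satisfies (1/n)Σᵢ 𝟙[yᵢ Σₜ αₜhₜ(xᵢ) ≤ 0] ≤ ∏ₜ₌₁ᵀ Zₜ. -/
open Finset Real

/-!
Along an AdaBoost run the weights unroll to `D_{T+1}(i) ∏ₜ Zₜ = D₁(i) exp(-yᵢ Σₜ αₜhₜ(xᵢ))`;
summing over `i` gives `∏ₜ Zₜ = Σᵢ D₁(i) exp(-margin)`, and `exp(-m)` dominates the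
indicator of `m ≤ 0`.
-/

theorem Fin.last_mul_prod_eq_mul_prod {M : Type*} [CommMonoid M] :
    ∀ {T : ℕ} (d : Fin (T + 1) → M) (z w : Fin T → M),
      (∀ t, d t.succ * z t = d t.castSucc * w t) → d (Fin.last T) * ∏ t, z t = d 0 * ∏ t, w t
  | 0, _, _, _, _ => by simp
  | T + 1, d, z, w, hrec => by
    have ih := Fin.last_mul_prod_eq_mul_prod (fun t => d t.castSucc) (fun t => z t.castSucc)
      (fun t => w t.castSucc) (fun t => by simpa only [Fin.succ_castSucc] using hrec t.castSucc)
    simp only [Fin.castSucc_zero] at ih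
    calc d (Fin.last (T + 1)) * ∏ t, z t
        = d (Fin.last T).succ * z (Fin.last T) * ∏ t : Fin T, z t.castSucc := by
          rw [Fin.prod_univ_castSucc, Fin.succ_last]; ac_rfl
      _ = d (Fin.last T).castSucc * (∏ t : Fin T, z t.castSucc) * w (Fin.last T) := by
          rw [hrec]; ac_rfl
      _ = d 0 * ∏ t, w t := by
          rw [ih, Fin.prod_univ_castSucc, mul_assoc]

lemma indicator_nonpos_le_exp_neg (x : ℝ) : (if x ≤ 0 then (1 : ℝ) else 0) ≤ exp (-x) := by
  split_ifs with hx
  · exact one_le_exp (by linarith)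
  · exact (exp_pos _).le

/-- `u t i` plays the role of `αₜ yᵢ hₜ(xᵢ)`. -/
structure IsAdaBoostRun {ι : Type*} [Fintype ι] {T : ℕ}
    (D : Fin (T + 1) → ι → ℝ) (Z : Fin T → ℝ) (u : Fin T → ι → ℝ) : Prop where
  normalizer_eq : ∀ t, Z t = ∑ i, D t.castSucc i * exp (-u t i)
  weight_succ : ∀ t i, D t.succ i = D t.castSucc i * exp (-u t i) / Z t

namespace IsAdaBoostRun

variable {ι : Type*} [Fintype ι] {T : ℕ} {D : Fin (T + 1) → ι → ℝ} {Z : Fin T → ℝ}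
  {u : Fin T → ι → ℝ}

lemma normalizer_pos [Nonempty ι] (hrun : IsAdaBoostRun D Z u) {t : Fin T}
    (hD : ∀ i, 0 < D t.castSucc i) : 0 < Z t := by
  rw [hrun.normalizer_eq]
  exact sum_pos (fun i _ => mul_pos (hD i) (exp_pos _)) univ_nonempty

lemma weight_pos [Nonempty ι] (hrun : IsAdaBoostRun D Z u) (h0 : ∀ i, 0 < D 0 i) :
    ∀ t i, 0 < D t i := by
  intro t
  induction t using Fin.induction with
  | zero => exact h0
  | succ t ih =>
    intro i
    rw [hrun.weight_succ]
    exact div_pos (mul_pos (ih i) (exp_pos _)) (hrun.normalizer_pos ih)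

lemma sum_weight_eq_one (hrun : IsAdaBoostRun D Z u) (hZ : ∀ t, Z t ≠ 0)
    (h0 : ∑ i, D 0 i = 1) (t : Fin (T + 1)) : ∑ i, D t i = 1 := by
  induction t using Fin.cases with
  | zero => exact h0
  | succ t =>
    simp_rw [hrun.weight_succ, ← sum_div, ← hrun.normalizer_eq, div_self (hZ t)]

lemma weight_last_mul_prod_normalizer (hrun : IsAdaBoostRun D Z u) (hZ : ∀ t, Z t ≠ 0)
    (i : ι) : D (Fin.last T) i * ∏ t, Z t = D 0 i * exp (-∑ t, u t i) := by
  rw [← sum_neg_distrib, exp_sum]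
  refine Fin.last_mul_prod_eq_mul_prod (fun t => D t i) Z (fun t => exp (-u t i)) fun t => ?_
  rw [hrun.weight_succ, div_mul_cancel₀ _ (hZ t)]

theorem weighted_error_le_prod_normalizer (hrun : IsAdaBoostRun D Z u)
    (h0pos : ∀ i, 0 < D 0 i) (h0sum : ∑ i, D 0 i = 1) :
    ∑ i, D 0 i * (if ∑ t, u t i ≤ 0 then (1 : ℝ) else 0) ≤ ∏ t, Z t := by
  have : Nonempty ι := by
    by_contra hempty
    simp [not_nonempty_iff.mp hempty] at h0sum
  have hD := hrun.weight_pos h0pos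
  have hZ (t : Fin T) : Z t ≠ 0 := (hrun.normalizer_pos fun i => hD _ i).ne'
  calc ∑ i, D 0 i * (if ∑ t, u t i ≤ 0 then (1 : ℝ) else 0)
      ≤ ∑ i, D 0 i * exp (-∑ t, u t i) :=
        sum_le_sum fun i _ => mul_le_mul_of_nonneg_left (indicator_nonpos_le_exp_neg _) (h0pos i).le
    _ = (∑ i, D (Fin.last T) i) * ∏ t, Z t := by
        simp_rw [sum_mul, hrun.weight_last_mul_prod_normalizer hZ]
    _ = ∏ t, Z t := by rw [hrun.sum_weight_eq_one hZ h0sum, one_mul]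

end IsAdaBoostRun

theorem adaboost_training_error_le_prod_Z_general
    (n T : ℕ) (hn : 0 < n)
    (y : Fin n → ℝ) (h : Fin T → Fin n → ℝ)
    (α : Fin T → ℝ) (Z : Fin T → ℝ)
    (D : Fin (T + 1) → Fin n → ℝ)
    (hD1 : ∀ i, D 0 i = 1 / n)
    (hZ : ∀ t : Fin T, Z t = ∑ i, D t.castSucc i * Real.exp (-(α t * y i * h t i)))
    (hDrec : ∀ (t : Fin T) (i : Fin n),
      D t.succ i = D t.castSucc i * Real.exp (-(α t * y i * h t i)) / Z t) :
    (1 / n : ℝ) * ∑ i, (if y i * ∑ t, α t * h t i ≤ 0 then (1:ℝ) else 0)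
      ≤ ∏ t, Z t := by
  have hrun : IsAdaBoostRun D Z fun t i => α t * y i * h t i := ⟨hZ, hDrec⟩
  have hmargin (i : Fin n) : y i * ∑ t, α t * h t i = ∑ t, α t * y i * h t i := by
    rw [mul_sum]; exact sum_congr rfl fun t _ => by ring
  have hnpos : (0 : ℝ) < n := Nat.cast_pos.mpr hn
  have h0sum : ∑ i, D 0 i = 1 := by simp [hD1, hnpos.ne']
  have := hrun.weighted_error_le_prod_normalizer (fun i => by rw [hD1]; positivity) h0sum
  simpa only [hD1, ← mul_sum, hmargin] using this

/-- Training error of the AdaBoost combined classifier is bounded by the product of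
the normalization factors `Zₜ`. -/
theorem adaboost_training_error_le_prod_Z
    (n T : ℕ) (hn : 0 < n)
    (y : Fin n → ℝ) (h : Fin T → Fin n → ℝ)
    (hy : ∀ i, y i = -1 ∨ y i = 1)
    (hh : ∀ t i, h t i = -1 ∨ h t i = 1)
    (α : Fin T → ℝ) (Z : Fin T → ℝ)
    (D : Fin (T + 1) → Fin n → ℝ)
    (hD1 : ∀ i, D 0 i = 1 / n)
    (hZ : ∀ t : Fin T, Z t = ∑ i, D t.castSucc i * Real.exp (-(α t * y i * h t i)))
    (hDrec : ∀ (t : Fin T) (i : Fin n),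
      D t.succ i = D t.castSucc i * Real.exp (-(α t * y i * h t i)) / Z t) :
    (1 / n : ℝ) * ∑ i, (if y i * ∑ t, α t * h t i ≤ 0 then (1:ℝ) else 0)
      ≤ ∏ t, Z t :=
  adaboost_training_error_le_prod_Z_general n T hn y h α Z D hD1 hZ hDrec
end

section
/- The function K ↦ K·erfc(√(log(7K))) is monotonically decreasing for K ≥ 1 (K a positive integer or real ≥ 1), and hence for all integers K ≥ 1, K·erfc(√(log 7K)) ≤ erfc(√(log 7)). -/
open Real MeasureTheory Set Filter

/-- The error function `erf(x) = (2/√π)∫₀ˣ e^{-t²} dt`. -/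
noncomputable def erf (x : ℝ) : ℝ :=
  (2 / Real.sqrt Real.pi) * ∫ t in (0:ℝ)..x, Real.exp (-t^2)

/-- The complementary error function `erfc(x) = 1 - erf(x)`. -/
noncomputable def erfc (x : ℝ) : ℝ := 1 - erf x

/-!
Writing `u = √(log (c x))`, the derivative of `x ↦ x · erfc u` is `erfc u - e^{-u²} / (√π u)`,
which is nonpositive by the Mills-ratio bound `erfc u ≤ e^{-u²} / (√π u)` for `u > 0`.
That bound comes from `∫ᵤ^∞ e^{-t²} dt ≤ ∫ᵤ^∞ (t/u) e^{-t²} dt = e^{-u²} / (2u)`.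
-/

theorem hasDerivAt_erfc (x : ℝ) : HasDerivAt erfc (-(2 / √π * exp (-x ^ 2))) x := by
  have hc : Continuous fun t : ℝ => exp (-t ^ 2) := by fun_prop
  exact (((hc.integral_hasStrictDerivAt 0 x).hasDerivAt).const_mul (2 / √π)).const_sub 1

theorem integrableOn_Ioi_exp_neg_sq (u : ℝ) : IntegrableOn (fun t : ℝ => exp (-t ^ 2)) (Ioi u) := by
  simpa using (integrable_exp_neg_mul_sq one_pos).integrableOn

theorem integrableOn_Ioi_mul_exp_neg_sq (u : ℝ) :
    IntegrableOn (fun t : ℝ => t * exp (-t ^ 2)) (Ioi u) := by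
  simpa using (integrable_mul_exp_neg_mul_sq one_pos).integrableOn

theorem erfc_eq_integral_Ioi (u : ℝ) : erfc u = 2 / √π * ∫ t in Ioi u, exp (-t ^ 2) := by
  have hsplit := intervalIntegral.integral_interval_add_Ioi
    (integrableOn_Ioi_exp_neg_sq 0) (integrableOn_Ioi_exp_neg_sq u)
  have hhalf : ∫ t in Ioi (0 : ℝ), exp (-t ^ 2) = √π / 2 := by
    simpa using integral_gaussian_Ioi 1
  have hπ : √π ≠ 0 := by positivity
  rw [erfc, erf, eq_sub_of_add_eq' (hsplit.trans hhalf)]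
  field_simp

theorem integral_Ioi_mul_exp_neg_sq (u : ℝ) : ∫ t in Ioi u, t * exp (-t ^ 2) = exp (-u ^ 2) / 2 := by
  have hderiv : ∀ x ∈ Ici u, HasDerivAt (fun t : ℝ => -exp (-t ^ 2) / 2) (x * exp (-x ^ 2)) x := by
    intro x _
    refine ((hasDerivAt_pow 2 x).fun_neg.exp.fun_neg.div_const 2).congr_deriv ?_
    norm_num
    ring
  have htend : Tendsto (fun t : ℝ => -exp (-t ^ 2) / 2) atTop (nhds 0) := by
    have hsq : Tendsto (fun t : ℝ => -t ^ 2) atTop atBot :=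
      tendsto_neg_atTop_atBot.comp (tendsto_pow_atTop two_ne_zero)
    simpa using ((tendsto_exp_atBot.comp hsq).neg).div_const 2
  rw [integral_Ioi_of_hasDerivAt_of_tendsto' hderiv (integrableOn_Ioi_mul_exp_neg_sq u) htend]
  ring

theorem integral_Ioi_exp_neg_sq_le {u : ℝ} (hu : 0 < u) :
    ∫ t in Ioi u, exp (-t ^ 2) ≤ exp (-u ^ 2) / (2 * u) := by
  have hpointwise : ∀ t ∈ Ioi u, exp (-t ^ 2) ≤ u⁻¹ * (t * exp (-t ^ 2)) := fun t ht => by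
    rw [← mul_assoc, inv_mul_eq_div]
    exact le_mul_of_one_le_left (exp_pos _).le ((one_le_div hu).2 (le_of_lt ht))
  calc ∫ t in Ioi u, exp (-t ^ 2)
      ≤ ∫ t in Ioi u, u⁻¹ * (t * exp (-t ^ 2)) :=
        setIntegral_mono_on (integrableOn_Ioi_exp_neg_sq u)
          ((integrableOn_Ioi_mul_exp_neg_sq u).const_mul u⁻¹) measurableSet_Ioi hpointwise
    _ = exp (-u ^ 2) / (2 * u) := by
        rw [integral_const_mul, integral_Ioi_mul_exp_neg_sq]
        field_simp

theorem erfc_le_exp_neg_sq_div {u : ℝ} (hu : 0 < u) : erfc u ≤ exp (-u ^ 2) / (√π * u) := by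
  calc erfc u ≤ 2 / √π * (exp (-u ^ 2) / (2 * u)) := by
        rw [erfc_eq_integral_Ioi]
        gcongr
        exact integral_Ioi_exp_neg_sq_le hu
    _ = exp (-u ^ 2) / (√π * u) := by field_simp

theorem hasDerivAt_mul_erfc_sqrt_log_mul {c x : ℝ} (hcx : 1 < c * x) :
    HasDerivAt (fun x => x * erfc √(log (c * x)))
      (erfc √(log (c * x)) - exp (-√(log (c * x)) ^ 2) / (√π * √(log (c * x)))) x := by
  have hcx0 : c * x ≠ 0 := by positivity
  have hx : x ≠ 0 := right_ne_zero_of_mul hcx0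
  have hlog : HasDerivAt (fun x => log (c * x)) (c / (c * x)) x := by
    simpa using ((hasDerivAt_id x).const_mul c).log hcx0
  have hsqrt := (hasDerivAt_sqrt (log_pos hcx).ne').comp x hlog
  refine ((hasDerivAt_id x).mul ((hasDerivAt_erfc _).comp x hsqrt)).congr_deriv ?_
  have hc : c ≠ 0 := left_ne_zero_of_mul hcx0
  simp only [id, Function.comp_apply]
  field_simp
  ring

theorem antitoneOn_mul_erfc_sqrt_log_mul {c : ℝ} (hc : 0 < c) :
    AntitoneOn (fun x => x * erfc √(log (c * x))) (Ici c⁻¹) := by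
  have hgt {x : ℝ} (hx : c⁻¹ < x) : 1 < c * x := by rwa [inv_lt_iff_one_lt_mul₀' hc] at hx
  refine antitoneOn_of_deriv_nonpos (convex_Ici _) ?_ ?_ ?_
  · refine fun x hx => ContinuousAt.continuousWithinAt ?_
    have hcx : c * x ≠ 0 := (mul_pos hc (lt_of_lt_of_le (inv_pos.2 hc) hx)).ne'
    exact continuousAt_id.mul ((hasDerivAt_erfc _).continuousAt.comp
      (continuous_sqrt.continuousAt.comp ((continuousAt_const.mul continuousAt_id).log hcx)))
  · rw [interior_Ici]
    exact fun x hx =>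
      (hasDerivAt_mul_erfc_sqrt_log_mul (hgt hx)).differentiableAt.differentiableWithinAt
  · rw [interior_Ici]
    intro x hx
    rw [(hasDerivAt_mul_erfc_sqrt_log_mul (hgt hx)).deriv, sub_nonpos]
    exact erfc_le_exp_neg_sq_div (sqrt_pos.2 (log_pos (hgt hx)))

/-- The function `K ↦ K·erfc(√(log 7K))` is monotonically decreasing for `K ≥ 1`,
and hence for all integers `K ≥ 1`, `K·erfc(√(log 7K)) ≤ erfc(√(log 7))`. -/
theorem K_erfc_antitone :
    AntitoneOn (fun x : ℝ => x * erfc (Real.sqrt (Real.log (7 * x)))) (Set.Ici 1)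
    ∧ ∀ K : ℕ, 1 ≤ K →
        (K : ℝ) * erfc (Real.sqrt (Real.log (7 * K))) ≤ erfc (Real.sqrt (Real.log 7)) := by
  have hanti : AntitoneOn (fun x : ℝ => x * erfc √(log (7 * x))) (Ici 1) :=
    (antitoneOn_mul_erfc_sqrt_log_mul (by norm_num)).mono (Ici_subset_Ici.2 (by norm_num))
  refine ⟨hanti, fun K hK => ?_⟩
  have hK1 : (1 : ℝ) ≤ K := by exact_mod_cast hK
  simpa using hanti self_mem_Ici hK1 hK1
end

section
/- (Talagrand's contraction lemma) Let Φ₁,…,Φₙ: ℝ → ℝ each be l-Lipschitz and let σ₁,…,σₙ be independent uniform {-1,+1} random variables. Then for any set H of real-valued functions on X and points x₁,…,xₙ ∈ X, E_σ[sup_{h∈H} Σᵢ σᵢ Φᵢ(h(xᵢ))] ≤ l·E_σ[sup_{h∈H} Σᵢ σᵢ h(xᵢ)]. -/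
open Finset Pointwise

/-- The value ±1 of a Rademacher variable encoded by a Boolean. -/
def radSign (b : Bool) : ℝ := if b then 1 else -1


lemma radSign_abs (b : Bool) : |radSign b| = 1 := by cases b <;> simp [radSign]

lemma radSign_not (b : Bool) : radSign (!b) = - radSign b := by cases b <;> simp [radSign]

lemma pair_step {X : Type*} {n : ℕ} (H : Set (X → ℝ)) (hH : H.Nonempty) (x : Fin n → X)
    (l : ℝ) (k : Fin n) (F : Fin n → ℝ → ℝ)
    (hLipk : ∀ a b : ℝ, |F k a - F k b| ≤ l * |a - b|)
    (σ : Fin n → Bool)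
    (hb1 : BddAbove {v : ℝ | ∃ h ∈ H, v =
      ∑ i, radSign (σ i) * Function.update F k (fun t => l * t) i (h (x i))})
    (hb2 : BddAbove {v : ℝ | ∃ h ∈ H, v =
      ∑ i, radSign (Function.update σ k (!σ k) i) * Function.update F k (fun t => l * t) i (h (x i))}) :
    sSup {v : ℝ | ∃ h ∈ H, v = ∑ i, radSign (σ i) * F i (h (x i))}
      + sSup {v : ℝ | ∃ h ∈ H, v = ∑ i, radSign (Function.update σ k (!σ k) i) * F i (h (x i))}
    ≤ sSup {v : ℝ | ∃ h ∈ H, v =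
        ∑ i, radSign (σ i) * Function.update F k (fun t => l * t) i (h (x i))}
      + sSup {v : ℝ | ∃ h ∈ H, v =
        ∑ i, radSign (Function.update σ k (!σ k) i) * Function.update F k (fun t => l * t) i (h (x i))} := by
  set F' := Function.update F k (fun t => l * t) with hF'
  set σ' := Function.update σ k (!σ k) with hσ'
  set s := radSign (σ k) with hs
  have hσ'k : radSign (σ' k) = -s := by rw [hσ', Function.update_self, radSign_not]
  have hσ'i : ∀ i, i ≠ k → σ' i = σ i := fun i hi => Function.update_of_ne hi _ _
  have hF'k : ∀ t : ℝ, F' k t = l * t := fun t => by rw [hF', Function.update_self]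
  have hF'i : ∀ i, i ≠ k → F' i = F i := fun i hi => Function.update_of_ne hi _ _
  obtain ⟨h₀, hh₀⟩ := hH
  have sum_split : ∀ (g : X → ℝ) (τ : Fin n → Bool) (G : Fin n → ℝ → ℝ),
      ∑ i, radSign (τ i) * G i (g (x i)) =
        radSign (τ k) * G k (g (x k)) + ∑ i ∈ Finset.univ.erase k, radSign (τ i) * G i (g (x i)) :=
    fun g τ G => (Finset.add_sum_erase _ _ (mem_univ k)).symm
  have erase_congr : ∀ (g : X → ℝ) (G : Fin n → ℝ → ℝ),
      ∑ i ∈ Finset.univ.erase k, radSign (σ' i) * G i (g (x i)) =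
        ∑ i ∈ Finset.univ.erase k, radSign (σ i) * G i (g (x i)) :=
    fun g G => Finset.sum_congr rfl fun i hi => by rw [hσ'i i (Finset.ne_of_mem_erase hi)]
  have erase_congr' : ∀ (g : X → ℝ) (τ : Fin n → Bool),
      ∑ i ∈ Finset.univ.erase k, radSign (τ i) * F' i (g (x i)) =
        ∑ i ∈ Finset.univ.erase k, radSign (τ i) * F i (g (x i)) :=
    fun g τ => Finset.sum_congr rfl fun i hi => by rw [hF'i i (Finset.ne_of_mem_erase hi)]
  set A : (X → ℝ) → ℝ := fun g => ∑ i ∈ Finset.univ.erase k, radSign (σ i) * F i (g (x i)) with hA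
  have hne1 : {v : ℝ | ∃ h ∈ H, v = ∑ i, radSign (σ i) * F i (h (x i))}.Nonempty :=
    ⟨_, h₀, hh₀, rfl⟩
  have hne2 : {v : ℝ | ∃ h ∈ H, v = ∑ i, radSign (σ' i) * F i (h (x i))}.Nonempty :=
    ⟨_, h₀, hh₀, rfl⟩
  have main : ∀ h ∈ H, ∀ h' ∈ H,
      (∑ i, radSign (σ i) * F i (h (x i))) + (∑ i, radSign (σ' i) * F i (h' (x i)))
      ≤ sSup {v : ℝ | ∃ h ∈ H, v = ∑ i, radSign (σ i) * F' i (h (x i))}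
        + sSup {v : ℝ | ∃ h ∈ H, v = ∑ i, radSign (σ' i) * F' i (h (x i))} := by
    intro h hh h' hh'
    set a := h (x k) with ha
    set b := h' (x k) with hb
    have ev1 : (∑ i, radSign (σ i) * F i (h (x i))) = s * F k a + A h := by
      rw [sum_split]
    have ev2 : (∑ i, radSign (σ' i) * F i (h' (x i))) = -s * F k b + A h' := by
      rw [sum_split, hσ'k, erase_congr]
    have hd : s * F k a - s * F k b ≤ l * |a - b| := by
      calc s * F k a - s * F k b = s * (F k a - F k b) := by ring
        _ ≤ |s * (F k a - F k b)| := le_abs_self _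
        _ = |F k a - F k b| := by rw [abs_mul, radSign_abs, one_mul]
        _ ≤ l * |a - b| := hLipk a b
    -- the four candidate elements
    have m1 : (s * (l * a) + A h) ∈
        {v : ℝ | ∃ g ∈ H, v = ∑ i, radSign (σ i) * F' i (g (x i))} := by
      refine ⟨h, hh, ?_⟩
      rw [sum_split h σ F', erase_congr', hF'k]
    have m2 : (-s * (l * b) + A h') ∈
        {v : ℝ | ∃ g ∈ H, v = ∑ i, radSign (σ' i) * F' i (g (x i))} := by
      refine ⟨h', hh', ?_⟩
      rw [sum_split h' σ' F', erase_congr', erase_congr, hF'k, hσ'k]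
    have m3 : (-s * (l * a) + A h) ∈
        {v : ℝ | ∃ g ∈ H, v = ∑ i, radSign (σ' i) * F' i (g (x i))} := by
      refine ⟨h, hh, ?_⟩
      rw [sum_split h σ' F', erase_congr', erase_congr, hF'k, hσ'k]
    have m4 : (s * (l * b) + A h') ∈
        {v : ℝ | ∃ g ∈ H, v = ∑ i, radSign (σ i) * F' i (g (x i))} := by
      refine ⟨h', hh', ?_⟩
      rw [sum_split h' σ F', erase_congr', hF'k]
    rcases le_total 0 (s * (a - b)) with hcase | hcase
    · have habs : |a - b| = s * (a - b) := by
        have : |s * (a - b)| = |a - b| := by rw [abs_mul, radSign_abs, one_mul]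
        rw [← this, abs_of_nonneg hcase]
      have h2 : l * |a - b| = s * (l * a) - s * (l * b) := by rw [habs]; ring
      have E1 := le_csSup hb1 m1
      have E2 := le_csSup hb2 m2
      rw [ev1, ev2]
      linarith
    · have habs : |a - b| = -(s * (a - b)) := by
        have : |s * (a - b)| = |a - b| := by rw [abs_mul, radSign_abs, one_mul]
        rw [← this, abs_of_nonpos hcase]
      have h2 : l * |a - b| = s * (l * b) - s * (l * a) := by rw [habs]; ring
      have E1 := le_csSup hb1 m4
      have E2 := le_csSup hb2 m3
      rw [ev1, ev2]
      linarith
  have h1 : sSup {v : ℝ | ∃ h ∈ H, v = ∑ i, radSign (σ i) * F i (h (x i))}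
      ≤ sSup {v : ℝ | ∃ h ∈ H, v = ∑ i, radSign (σ i) * F' i (h (x i))}
        + sSup {v : ℝ | ∃ h ∈ H, v = ∑ i, radSign (σ' i) * F' i (h (x i))}
        - sSup {v : ℝ | ∃ h ∈ H, v = ∑ i, radSign (σ' i) * F i (h (x i))} := by
    refine csSup_le hne1 ?_
    rintro v ⟨h, hh, rfl⟩
    have h2 : sSup {v : ℝ | ∃ h ∈ H, v = ∑ i, radSign (σ' i) * F i (h (x i))}
        ≤ sSup {v : ℝ | ∃ h ∈ H, v = ∑ i, radSign (σ i) * F' i (h (x i))}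
          + sSup {v : ℝ | ∃ h ∈ H, v = ∑ i, radSign (σ' i) * F' i (h (x i))}
          - (∑ i, radSign (σ i) * F i (h (x i))) := by
      refine csSup_le hne2 ?_
      rintro w ⟨h', hh', rfl⟩
      have := main h hh h' hh'
      linarith
    linarith
  linarith

lemma coord_bound {X : Type*} {n : ℕ} (H : Set (X → ℝ)) (x : Fin n → X)
    (hbdd : ∀ σ : Fin n → Bool,
      BddAbove {v : ℝ | ∃ h ∈ H, v = ∑ i, radSign (σ i) * h (x i)}) :
    ∃ C : Fin n → ℝ, ∀ i : Fin n, ∀ h ∈ H, |h (x i)| ≤ C i := by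
  refine ⟨fun i => max
    ((sSup {v : ℝ | ∃ h ∈ H, v = ∑ j, radSign (decide (j = i)) * h (x j)}
      + sSup {v : ℝ | ∃ h ∈ H, v = ∑ j, radSign true * h (x j)}) / 2)
    ((sSup {v : ℝ | ∃ h ∈ H, v = ∑ j, radSign (!decide (j = i)) * h (x j)}
      + sSup {v : ℝ | ∃ h ∈ H, v = ∑ j, radSign false * h (x j)}) / 2), ?_⟩
  intro i h hh
  have e1 : (∑ j, radSign (decide (j = i)) * h (x j)) + (∑ j, radSign true * h (x j))
      = 2 * h (x i) := by
    rw [← Finset.sum_add_distrib, Finset.sum_eq_single i]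
    · simp [radSign]; ring
    · intro j _ hji
      simp [radSign, hji]
    · simp
  have e2 : (∑ j, radSign (!decide (j = i)) * h (x j)) + (∑ j, radSign false * h (x j))
      = -2 * h (x i) := by
    rw [← Finset.sum_add_distrib, Finset.sum_eq_single i]
    · simp [radSign]; ring
    · intro j _ hji
      simp [radSign, hji]
    · simp
  have E1 : (∑ j, radSign (decide (j = i)) * h (x j))
      ≤ sSup {v : ℝ | ∃ h ∈ H, v = ∑ j, radSign (decide (j = i)) * h (x j)} :=
    le_csSup (hbdd (fun j => decide (j = i))) ⟨h, hh, rfl⟩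
  have E2 : (∑ j, radSign true * h (x j))
      ≤ sSup {v : ℝ | ∃ h ∈ H, v = ∑ j, radSign true * h (x j)} :=
    le_csSup (hbdd (fun _ => true)) ⟨h, hh, rfl⟩
  have E3 : (∑ j, radSign (!decide (j = i)) * h (x j))
      ≤ sSup {v : ℝ | ∃ h ∈ H, v = ∑ j, radSign (!decide (j = i)) * h (x j)} :=
    le_csSup (hbdd (fun j => !decide (j = i))) ⟨h, hh, rfl⟩
  have E4 : (∑ j, radSign false * h (x j))
      ≤ sSup {v : ℝ | ∃ h ∈ H, v = ∑ j, radSign false * h (x j)} :=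
    le_csSup (hbdd (fun _ => false)) ⟨h, hh, rfl⟩
  rw [abs_le]
  constructor
  · have := le_max_right
      ((sSup {v : ℝ | ∃ h ∈ H, v = ∑ j, radSign (decide (j = i)) * h (x j)}
      + sSup {v : ℝ | ∃ h ∈ H, v = ∑ j, radSign true * h (x j)}) / 2)
      ((sSup {v : ℝ | ∃ h ∈ H, v = ∑ j, radSign (!decide (j = i)) * h (x j)}
      + sSup {v : ℝ | ∃ h ∈ H, v = ∑ j, radSign false * h (x j)}) / 2)
    linarith
  · have := le_max_left
      ((sSup {v : ℝ | ∃ h ∈ H, v = ∑ j, radSign (decide (j = i)) * h (x j)}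
      + sSup {v : ℝ | ∃ h ∈ H, v = ∑ j, radSign true * h (x j)}) / 2)
      ((sSup {v : ℝ | ∃ h ∈ H, v = ∑ j, radSign (!decide (j = i)) * h (x j)}
      + sSup {v : ℝ | ∃ h ∈ H, v = ∑ j, radSign false * h (x j)}) / 2)
    linarith

lemma fam_bdd {X : Type*} {n : ℕ} (H : Set (X → ℝ)) (x : Fin n → X)
    (l : ℝ) (hl : 0 ≤ l) (Φ : Fin n → ℝ → ℝ)
    (hLip : ∀ i : Fin n, ∀ a b : ℝ, |Φ i a - Φ i b| ≤ l * |a - b|)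
    (C : Fin n → ℝ) (hC : ∀ i : Fin n, ∀ h ∈ H, |h (x i)| ≤ C i)
    (G : Fin n → ℝ → ℝ) (hG : ∀ i, G i = Φ i ∨ G i = fun t => l * t)
    (σ : Fin n → Bool) :
    BddAbove {v : ℝ | ∃ h ∈ H, v = ∑ i, radSign (σ i) * G i (h (x i))} := by
  refine ⟨∑ i, (|Φ i 0| + l * C i), ?_⟩
  rintro v ⟨h, hh, rfl⟩
  refine Finset.sum_le_sum fun i _ => ?_
  have hhx := hC i h hh
  have hb : |G i (h (x i))| ≤ |Φ i 0| + l * C i := by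
    rcases hG i with hg | hg
    · rw [hg]
      have h1 : |Φ i (h (x i)) - Φ i 0| ≤ l * |h (x i) - 0| := hLip i _ 0
      rw [sub_zero] at h1
      have h2 : |Φ i (h (x i))| ≤ |Φ i (h (x i)) - Φ i 0| + |Φ i 0| := by
        have := abs_add_le (Φ i (h (x i)) - Φ i 0) (Φ i 0)
        simpa using this
      have h3 : l * |h (x i)| ≤ l * C i := mul_le_mul_of_nonneg_left hhx hl
      linarith
    · rw [hg]
      have : |l * h (x i)| = l * |h (x i)| := by
        rw [abs_mul, abs_of_nonneg hl]
      rw [this]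
      have h3 : l * |h (x i)| ≤ l * C i := mul_le_mul_of_nonneg_left hhx hl
      have := abs_nonneg (Φ i 0)
      linarith
  calc radSign (σ i) * G i (h (x i)) ≤ |radSign (σ i) * G i (h (x i))| := le_abs_self _
    _ = |G i (h (x i))| := by rw [abs_mul, radSign_abs, one_mul]
    _ ≤ _ := hb

lemma sum_flip {n : ℕ} (k : Fin n) (f : (Fin n → Bool) → ℝ) :
    ∑ σ : Fin n → Bool, f (Function.update σ k (!σ k)) = ∑ σ : Fin n → Bool, f σ := by
  have hinv : Function.Involutive (fun σ : Fin n → Bool => Function.update σ k (!σ k)) := by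
    intro σ; funext j
    rcases eq_or_ne j k with rfl | hj
    · simp [Function.update_self]
    · simp [Function.update_of_ne hj]
  exact Fintype.sum_bijective _ hinv.bijective _ _ (fun σ => rfl)

/-- Interpolating family: coordinates below `m` use `t ↦ l*t`, the rest use `Φ`. -/
def mixFam {n : ℕ} (l : ℝ) (Φ : Fin n → ℝ → ℝ) (m : ℕ) : Fin n → ℝ → ℝ :=
  fun i => if (i : ℕ) < m then (fun t => l * t) else Φ i

/-- Talagrand's contraction lemma: for `l`-Lipschitz functions `Φᵢ : ℝ → ℝ`,
`E_σ[sup_{h∈H} Σᵢ σᵢ Φᵢ(h(xᵢ))] ≤ l·E_σ[sup_{h∈H} Σᵢ σᵢ h(xᵢ)]`. -/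
theorem talagrand_contraction {X : Type*} (n : ℕ)
    (H : Set (X → ℝ)) (hH : H.Nonempty) (x : Fin n → X)
    (l : ℝ) (hl : 0 ≤ l) (Φ : Fin n → ℝ → ℝ)
    (hLip : ∀ i : Fin n, ∀ a b : ℝ, |Φ i a - Φ i b| ≤ l * |a - b|)
    (hbdd : ∀ σ : Fin n → Bool,
      BddAbove {v : ℝ | ∃ h ∈ H, v = ∑ i, radSign (σ i) * h (x i)})
    (hbddΦ : ∀ σ : Fin n → Bool,
      BddAbove {v : ℝ | ∃ h ∈ H, v = ∑ i, radSign (σ i) * Φ i (h (x i))}) :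
    ((2:ℝ)^n)⁻¹ * ∑ σ : Fin n → Bool,
        sSup {v : ℝ | ∃ h ∈ H, v = ∑ i, radSign (σ i) * Φ i (h (x i))}
      ≤ l * (((2:ℝ)^n)⁻¹ * ∑ σ : Fin n → Bool,
        sSup {v : ℝ | ∃ h ∈ H, v = ∑ i, radSign (σ i) * h (x i)}) := by
  obtain ⟨C, hC⟩ := coord_bound H x hbdd
  have hGalt : ∀ m i, mixFam l Φ m i = Φ i ∨ mixFam l Φ m i = fun t => l * t := by
    intro m i
    by_cases h : (i : ℕ) < m
    · right; simp [mixFam, h]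
    · left; simp [mixFam, h]
  have hbddG : ∀ m (σ : Fin n → Bool),
      BddAbove {v : ℝ | ∃ h ∈ H, v = ∑ i, radSign (σ i) * mixFam l Φ m i (h (x i))} :=
    fun m σ => fam_bdd H x l hl Φ hLip C hC (mixFam l Φ m) (hGalt m) σ
  have step : ∀ m, m < n →
      (∑ σ : Fin n → Bool,
        sSup {v : ℝ | ∃ h ∈ H, v = ∑ i, radSign (σ i) * mixFam l Φ m i (h (x i))})
      ≤ ∑ σ : Fin n → Bool,
        sSup {v : ℝ | ∃ h ∈ H, v = ∑ i, radSign (σ i) * mixFam l Φ (m+1) i (h (x i))} := by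
    intro m hm
    set k : Fin n := ⟨m, hm⟩ with hk
    have hGmk : ∀ a b : ℝ, |mixFam l Φ m k a - mixFam l Φ m k b| ≤ l * |a - b| := by
      have hk' : mixFam l Φ m k = Φ k := by simp [mixFam, hk]
      rw [hk']; exact hLip k
    have hupd : mixFam l Φ (m+1) = Function.update (mixFam l Φ m) k (fun t => l * t) := by
      funext i
      rcases eq_or_ne i k with rfl | hik
      · simp [mixFam, hk, Function.update_self]
      · rw [Function.update_of_ne hik]
        have him : (i : ℕ) ≠ m := fun h => hik (Fin.ext (by simp [hk, h]))
        by_cases h' : (i : ℕ) < m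
        · simp [mixFam, h', Nat.lt_succ_of_lt h']
        · have h'' : ¬ (i : ℕ) < m + 1 := by omega
          simp [mixFam, h', h'']
    rw [hupd]
    have pair := fun σ : Fin n → Bool => pair_step H hH x l k (mixFam l Φ m) hGmk σ
      (by rw [← hupd]; exact hbddG (m+1) σ)
      (by rw [← hupd]; exact hbddG (m+1) (Function.update σ k (!σ k)))
    have hfl1 := sum_flip k (fun τ => sSup {v : ℝ | ∃ h ∈ H, v =
      ∑ i, radSign (τ i) * mixFam l Φ m i (h (x i))})
    have hfl2 := sum_flip k (fun τ => sSup {v : ℝ | ∃ h ∈ H, v =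
      ∑ i, radSign (τ i) * Function.update (mixFam l Φ m) k (fun t => l * t) i (h (x i))})
    have hsum := Finset.sum_le_sum (s := Finset.univ) (fun σ _ => pair σ)
    rw [Finset.sum_add_distrib, Finset.sum_add_distrib] at hsum
    linarith
  have mono : ∀ m, m ≤ n →
      (∑ σ : Fin n → Bool,
        sSup {v : ℝ | ∃ h ∈ H, v = ∑ i, radSign (σ i) * mixFam l Φ 0 i (h (x i))})
      ≤ ∑ σ : Fin n → Bool,
        sSup {v : ℝ | ∃ h ∈ H, v = ∑ i, radSign (σ i) * mixFam l Φ m i (h (x i))} := by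
    intro m
    induction m with
    | zero => intro _; exact le_rfl
    | succ m ih =>
      intro hm
      exact le_trans (ih (le_of_lt hm)) (step m hm)
  have hG0 : mixFam l Φ 0 = Φ := funext fun i => by simp [mixFam]
  have hGn : mixFam l Φ n = fun _ => fun t => l * t := funext fun i => by simp [mixFam, i.isLt]
  have scale : ∀ σ : Fin n → Bool,
      sSup {v : ℝ | ∃ h ∈ H, v = ∑ i, radSign (σ i) * (l * h (x i))}
        = l * sSup {v : ℝ | ∃ h ∈ H, v = ∑ i, radSign (σ i) * h (x i)} := by
    intro σ
    have hset : {v : ℝ | ∃ h ∈ H, v = ∑ i, radSign (σ i) * (l * h (x i))}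
        = l • {v : ℝ | ∃ h ∈ H, v = ∑ i, radSign (σ i) * h (x i)} := by
      ext v
      constructor
      · rintro ⟨h, hh, rfl⟩
        refine ⟨∑ i, radSign (σ i) * h (x i), ⟨h, hh, rfl⟩, ?_⟩
        simp only [smul_eq_mul, Finset.mul_sum]
        exact Finset.sum_congr rfl fun i _ => by ring
      · rintro ⟨w, ⟨h, hh, rfl⟩, rfl⟩
        refine ⟨h, hh, ?_⟩
        simp only [smul_eq_mul, Finset.mul_sum]
        exact Finset.sum_congr rfl fun i _ => by ring
    rw [hset, Real.sSup_smul_of_nonneg hl, smul_eq_mul]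
  have chain : (∑ σ : Fin n → Bool,
        sSup {v : ℝ | ∃ h ∈ H, v = ∑ i, radSign (σ i) * Φ i (h (x i))})
      ≤ l * ∑ σ : Fin n → Bool,
        sSup {v : ℝ | ∃ h ∈ H, v = ∑ i, radSign (σ i) * h (x i)} := by
    calc (∑ σ : Fin n → Bool,
          sSup {v : ℝ | ∃ h ∈ H, v = ∑ i, radSign (σ i) * Φ i (h (x i))})
        = ∑ σ : Fin n → Bool,
          sSup {v : ℝ | ∃ h ∈ H, v = ∑ i, radSign (σ i) * mixFam l Φ 0 i (h (x i))} := by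
          rw [hG0]
      _ ≤ ∑ σ : Fin n → Bool,
          sSup {v : ℝ | ∃ h ∈ H, v = ∑ i, radSign (σ i) * mixFam l Φ n i (h (x i))} :=
          mono n le_rfl
      _ = ∑ σ : Fin n → Bool,
          sSup {v : ℝ | ∃ h ∈ H, v = ∑ i, radSign (σ i) * (l * h (x i))} := by
          simp only [hGn]
      _ = ∑ σ : Fin n → Bool,
          l * sSup {v : ℝ | ∃ h ∈ H, v = ∑ i, radSign (σ i) * h (x i)} :=
          Finset.sum_congr rfl fun σ _ => scale σ
      _ = l * ∑ σ : Fin n → Bool,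
          sSup {v : ℝ | ∃ h ∈ H, v = ∑ i, radSign (σ i) * h (x i)} := by
          rw [Finset.mul_sum]
  calc ((2:ℝ)^n)⁻¹ * ∑ σ : Fin n → Bool,
        sSup {v : ℝ | ∃ h ∈ H, v = ∑ i, radSign (σ i) * Φ i (h (x i))}
      ≤ ((2:ℝ)^n)⁻¹ * (l * ∑ σ : Fin n → Bool,
        sSup {v : ℝ | ∃ h ∈ H, v = ∑ i, radSign (σ i) * h (x i)}) :=
        mul_le_mul_of_nonneg_left chain (by positivity)
    _ = l * (((2:ℝ)^n)⁻¹ * ∑ σ : Fin n → Bool,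
        sSup {v : ℝ | ∃ h ∈ H, v = ∑ i, radSign (σ i) * h (x i)}) := by ring
end
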